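/- If P is a θ-invariant probability measure on (Ω, 𝒜) with θ a measurable bijection, and B ∈ 𝒜 satisfies P(T_B < ∞) = 1 and P(T̃_B < ∞) = 1, then ∫_B T_B dP = 1 and, for every A ∈ 𝒜, ∫_B M_B(A) dP = P(A). In particular P is uniquely determined by its cycle measure over B. -/
import Mathlib

open MeasureTheory
open scoped ENNReal Classical
noncomputable section

/-- First hitting time `inf {n ≥ 1 : θ^n ω ∈ B}` valued in `ℕ∞` (`⊤` if never). -/
def hitT {Ω : Type*} (θ : Ω → Ω) (B : Set Ω) (ω : Ω) : ℕ∞ :=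
  ⨅ (n : ℕ) (_ : 0 < n ∧ θ^[n] ω ∈ B), (n : ℕ∞)

/-- Number of visits to `A` strictly before the hitting time of `B` (in `[0,∞]`). -/
def countM {Ω : Type*} (θ : Ω → Ω) (B A : Set Ω) (ω : Ω) : ℝ≥0∞ :=
  ∑' n : ℕ, if (n : ℕ∞) < hitT θ B ω ∧ θ^[n] ω ∈ A then 1 else 0

section Aux
variable {Ω : Type*}

lemma lt_hitT_iff (θ : Ω → Ω) (B : Set Ω) (ω : Ω) (n : ℕ) :
    (n : ℕ∞) < hitT θ B ω ↔ ∀ k : ℕ, 0 < k → k ≤ n → θ^[k] ω ∉ B := by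
  rw [hitT, ← ENat.add_one_le_iff (by simp : (n:ℕ∞) ≠ ⊤)]
  simp only [le_iInf_iff]
  constructor
  · intro h k hk hkn hkB
    have h1 : (n:ℕ∞) < (k:ℕ∞) := (ENat.add_one_le_iff (by simp)).mp (h k ⟨hk, hkB⟩)
    exact absurd (Nat.cast_le.mpr hkn) (not_le.mpr h1)
  · rintro h k ⟨hk, hkB⟩
    rw [ENat.add_one_le_iff (by simp), Nat.cast_lt]
    by_contra hle
    exact h k hk (by omega) hkB

lemma hitT_lt_top_iff (θ : Ω → Ω) (B : Set Ω) (ω : Ω) :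
    hitT θ B ω < ⊤ ↔ ∃ k : ℕ, 0 < k ∧ θ^[k] ω ∈ B := by
  constructor
  · intro h
    by_contra hn
    push_neg at hn
    have htop : hitT θ B ω = ⊤ := by
      rw [hitT, iInf_eq_top]
      intro k
      rw [iInf_eq_top]
      rintro ⟨hk, hkB⟩
      exact absurd hkB (hn k hk)
    simp [htop] at h
  · rintro ⟨k, hk, hkB⟩
    exact lt_of_le_of_lt (iInf_le_of_le k (iInf_le _ ⟨hk, hkB⟩)) (ENat.coe_lt_top k)

lemma measSet_lt_hitT {θ : Ω → Ω} {B : Set Ω} [MeasurableSpace Ω]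
    (hθ : Measurable θ) (hB : MeasurableSet B) (n : ℕ) :
    MeasurableSet {ω | (n:ℕ∞) < hitT θ B ω} := by
  have : {ω | (n:ℕ∞) < hitT θ B ω} = ⋂ (k:ℕ) (_ : 0 < k ∧ k ≤ n), θ^[k] ⁻¹' Bᶜ := by
    ext ω; simp [lt_hitT_iff, and_imp]
  rw [this]
  exact MeasurableSet.iInter fun k => MeasurableSet.iInter fun _ => (hθ.iterate k) hB.compl

/-- the set of points whose first backward visit (allowing time 0) to `B` is exactly `n` -/
def Cset (g : Ω → Ω) (B : Set Ω) (n : ℕ) : Set Ω :=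
  {ω | g^[n] ω ∈ B ∧ ∀ j < n, g^[j] ω ∉ B}

lemma measSet_Cset {g : Ω → Ω} {B : Set Ω} [MeasurableSpace Ω]
    (hg : Measurable g) (hB : MeasurableSet B) (n : ℕ) :
    MeasurableSet (Cset g B n) := by
  have : Cset g B n = g^[n] ⁻¹' B ∩ ⋂ (j:ℕ) (_ : j < n), g^[j] ⁻¹' Bᶜ := by
    ext ω; simp [Cset]
  rw [this]
  exact ((hg.iterate n) hB).inter
    (MeasurableSet.iInter fun j => MeasurableSet.iInter fun _ => (hg.iterate j) hB.compl)

lemma Cset_disjoint (g : Ω → Ω) (B : Set Ω) :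
    Pairwise (Function.onFun Disjoint fun n => Cset g B n) := by
  intro m n hmn
  rw [Function.onFun, Set.disjoint_left]
  rintro x ⟨hxm, hm⟩ ⟨hxn, hn⟩
  rcases lt_or_gt_of_ne hmn with h | h
  · exact hn m h hxm
  · exact hm n h hxn

lemma Cset_cover {g : Ω → Ω} {B : Set Ω} {ω : Ω} (h : hitT g B ω < ⊤) :
    ∃ n, ω ∈ Cset g B n := by
  obtain ⟨k, _, hkB⟩ := (hitT_lt_top_iff g B ω).mp h
  have hex : ∃ m, g^[m] ω ∈ B := ⟨k, hkB⟩
  exact ⟨Nat.find hex, Nat.find_spec hex, fun j hj => Nat.find_min hex hj⟩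

lemma key_set (θ : Ω ≃ Ω) (B A : Set Ω) (n : ℕ) :
    {ω | (n:ℕ∞) < hitT (⇑θ) B ω ∧ (⇑θ)^[n] ω ∈ A} ∩ B
      = (⇑θ)^[n] ⁻¹' (A ∩ Cset (⇑θ.symm) B n) := by
  have hL : ∀ (m : ℕ) (x : Ω), (⇑θ.symm)^[m] ((⇑θ)^[m] x) = x := fun m =>
    (Function.LeftInverse.iterate θ.symm_apply_apply m)
  have hshift : ∀ j ≤ n, ∀ x : Ω, (⇑θ.symm)^[j] ((⇑θ)^[n] x) = (⇑θ)^[n-j] x := by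
    intro j hj x
    conv_lhs => rw [show n = j + (n-j) by omega, Function.iterate_add_apply]
    exact hL j _
  ext ω
  simp only [Set.mem_inter_iff, Set.mem_preimage, Set.mem_setOf_eq, lt_hitT_iff, Cset]
  constructor
  · rintro ⟨⟨hno, hA⟩, hωB⟩
    refine ⟨hA, ?_, ?_⟩
    · rw [hL n]; exact hωB
    · intro j hj
      rw [hshift j hj.le]
      exact hno (n - j) (by omega) (by omega)
  · rintro ⟨hA, hnB, hno⟩
    rw [hL n] at hnB
    refine ⟨⟨?_, hA⟩, hnB⟩
    intro k hk hkn hkB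
    have h2 := hno (n - k) (by omega)
    rw [hshift (n-k) (by omega)] at h2
    rw [show n - (n-k) = k by omega] at h2
    exact h2 hkB

lemma coe_hitT_eq (θ : Ω → Ω) (B : Set Ω) (ω : Ω) :
    (hitT θ B ω : ℝ≥0∞) = countM θ B Set.univ ω := by
  rw [countM]
  simp only [Set.mem_univ, and_true]
  induction hitT θ B ω using ENat.recTopCoe with
  | top =>
    simp only [ENat.toENNReal_top]
    have : ∀ n : ℕ, ((n:ℕ∞) < ⊤) := fun n => ENat.coe_lt_top n
    simp only [this, if_true]
    exact (ENNReal.tsum_const_eq_top_of_ne_zero one_ne_zero).symm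
  | coe m =>
    rw [tsum_eq_sum (s := Finset.range m) ?_]
    · rw [Finset.sum_congr rfl (fun b hb => if_pos (by
        simp only [Finset.mem_range] at hb; exact_mod_cast hb))]
      simp
    · intro b hb
      simp only [Finset.mem_range, not_lt] at hb
      rw [if_neg (by simp only [Nat.cast_lt]; omega)]

end Aux

/-- If `P(T_B < ∞) = P(T̃_B < ∞) = 1` then `∫_B T_B dP = 1` and the cycle measure
over `B` recovers `P`. -/
theorem cycle_measure_recovers {Ω : Type*} [MeasurableSpace Ω]
    (θ : Ω ≃ Ω) (hθ : Measurable θ) (hθ' : Measurable θ.symm)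
    (P : Measure Ω) [IsProbabilityMeasure P]
    (hinv : ∀ A : Set Ω, MeasurableSet A → P (⇑θ ⁻¹' A) = P A)
    (B : Set Ω) (hB : MeasurableSet B)
    (hfwd : P {ω | hitT (⇑θ) B ω < ⊤} = 1)
    (hbwd : P {ω | hitT (⇑θ.symm) B ω < ⊤} = 1) :
    (∫⁻ ω in B, (hitT (⇑θ) B ω : ℝ≥0∞) ∂P = 1) ∧
    (∀ A : Set Ω, MeasurableSet A → ∫⁻ ω in B, countM (⇑θ) B A ω ∂P = P A) := by
  have iter_inv : ∀ (n : ℕ) (S : Set Ω), MeasurableSet S → P ((⇑θ)^[n] ⁻¹' S) = P S := by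
    intro n
    induction n with
    | zero => intro S hS; simp
    | succ n ih =>
      intro S hS
      rw [Function.iterate_succ, Set.preimage_comp, hinv _ ((hθ.iterate n) hS), ih S hS]
  have hUmeas : MeasurableSet (⋃ n, Cset (⇑θ.symm) B n) :=
    MeasurableSet.iUnion fun n => measSet_Cset hθ' hB n
  have hU1 : P (⋃ n, Cset (⇑θ.symm) B n) = 1 := by
    refine le_antisymm prob_le_one ?_
    rw [← hbwd]
    exact measure_mono fun ω hω => Set.mem_iUnion.mpr (Cset_cover hω)
  have hUc : P (⋃ n, Cset (⇑θ.symm) B n)ᶜ = 0 := by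
    rw [measure_compl hUmeas (measure_ne_top _ _), hU1]; simp
  have main : ∀ A : Set Ω, MeasurableSet A → ∫⁻ ω in B, countM (⇑θ) B A ω ∂P = P A := by
    intro A hA
    set S : ℕ → Set Ω := fun n => {ω | (n:ℕ∞) < hitT (⇑θ) B ω ∧ (⇑θ)^[n] ω ∈ A} with hS
    have hSmeas : ∀ n : ℕ, MeasurableSet (S n) := fun n =>
      (measSet_lt_hitT hθ hB n).inter ((hθ.iterate n) hA)
    calc ∫⁻ ω in B, countM (⇑θ) B A ω ∂P
        = ∫⁻ ω in B, ∑' n : ℕ, (S n).indicator 1 ω ∂P := by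
          refine lintegral_congr fun ω => ?_
          rw [countM]
          refine tsum_congr fun n => ?_
          rw [Set.indicator_apply]
          rfl
      _ = ∑' n : ℕ, ∫⁻ ω in B, (S n).indicator 1 ω ∂P :=
          lintegral_tsum fun n => (measurable_one.indicator (hSmeas n)).aemeasurable
      _ = ∑' n : ℕ, P (S n ∩ B) := by
          refine tsum_congr fun n => ?_
          rw [lintegral_indicator_one (hSmeas n), Measure.restrict_apply (hSmeas n)]
      _ = ∑' n : ℕ, P (A ∩ Cset (⇑θ.symm) B n) := by
          refine tsum_congr fun n => ?_
          rw [hS]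
          rw [key_set θ B A n, iter_inv n _ (hA.inter (measSet_Cset hθ' hB n))]
      _ = P (⋃ n, A ∩ Cset (⇑θ.symm) B n) :=
          (measure_iUnion
            (fun m n h => Disjoint.mono Set.inter_subset_right Set.inter_subset_right
              (Cset_disjoint (⇑θ.symm) B h))
            (fun n => hA.inter (measSet_Cset hθ' hB n))).symm
      _ = P A := by
          rw [← Set.inter_iUnion]
          refine le_antisymm (measure_mono Set.inter_subset_left) ?_
          calc P A ≤ P ((A ∩ ⋃ n, Cset (⇑θ.symm) B n) ∪ (⋃ n, Cset (⇑θ.symm) B n)ᶜ) := by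
                refine measure_mono fun x hx => ?_
                by_cases hxU : x ∈ ⋃ n, Cset (⇑θ.symm) B n
                · exact Or.inl ⟨hx, hxU⟩
                · exact Or.inr hxU
            _ ≤ P (A ∩ ⋃ n, Cset (⇑θ.symm) B n) + P (⋃ n, Cset (⇑θ.symm) B n)ᶜ :=
                measure_union_le _ _
            _ = P (A ∩ ⋃ n, Cset (⇑θ.symm) B n) := by rw [hUc, add_zero]
  refine ⟨?_, main⟩
  calc ∫⁻ ω in B, (hitT (⇑θ) B ω : ℝ≥0∞) ∂P
      = ∫⁻ ω in B, countM (⇑θ) B Set.univ ω ∂P :=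
        lintegral_congr fun ω => coe_hitT_eq (⇑θ) B ω
    _ = P Set.univ := main Set.univ MeasurableSet.univ
    _ = 1 := measure_univ
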